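/- arXiv:2110.10299 — 3 statements merged into one kernel-verified Lean document; each statement's English description precedes it below -/
import Mathlib

section
/- The distribution-valued map s ↦ (x₊^s, ·) extends to a meromorphic function on ℂ whose only singularities are simple poles at s = -1, -2, -3, ..., and the residue at s = -k is the distribution φ ↦ φ^{(k-1)}(0)/(k-1)!. -/
open MeasureTheory Set Filter Asymptotics Complex Topology
open scoped ContDiff

namespace Stmt5Aux

lemma ev_top {ψ : ℝ → ℂ} (hc : HasCompactSupport ψ) : ∀ᶠ x : ℝ in atTop, ψ x = 0 := by
  obtain ⟨R, hR⟩ := hc.isCompact.bddAbove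
  filter_upwards [eventually_gt_atTop R] with x hx
  exact image_eq_zero_of_notMem_tsupport (fun h => absurd (hR h) (not_le.mpr hx))

lemma bigO_top {ψ : ℝ → ℂ} (hc : HasCompactSupport ψ) (a : ℝ) :
    ψ =O[atTop] (fun x : ℝ => x ^ (-a)) := by
  refine (isBigO_zero (fun x : ℝ => x ^ (-a)) atTop).congr' ?_ EventuallyEq.rfl
  filter_upwards [ev_top hc] with x hx using hx.symm

lemma bigO_zero {ψ : ℝ → ℂ} (hψ : Continuous ψ) :
    ψ =O[𝓝[>] (0:ℝ)] (fun x : ℝ => x ^ (-(0:ℝ))) := by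
  refine ((hψ.tendsto 0).mono_left nhdsWithin_le_nhds).isBigO_one ℝ |>.congr'
    EventuallyEq.rfl ?_
  filter_upwards [self_mem_nhdsWithin] with x (hx : (0:ℝ) < x)
  simp [Real.rpow_natCast]

lemma integrableOn {ψ : ℝ → ℂ} (hψ : Continuous ψ) (hc : HasCompactSupport ψ) {s : ℂ}
    (hs : -1 < s.re) : IntegrableOn (fun x : ℝ => (x : ℂ) ^ s * ψ x) (Ioi 0) := by
  have h := mellinConvergent_of_isBigO_rpow (f := ψ) (s := s + 1) (a := s.re + 2) (b := 0)
    (hψ.locallyIntegrable.locallyIntegrableOn _) (bigO_top hc _) (by simp only [Complex.add_re, Complex.one_re]; linarith)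
    (bigO_zero hψ) (by simp only [Complex.add_re, Complex.one_re]; linarith)
  simpa [MellinConvergent, add_sub_cancel_right, smul_eq_mul] using h

lemma integral_eq_mellin {ψ : ℝ → ℂ} (s : ℂ) :
    (∫ x in Ioi (0:ℝ), (x : ℂ) ^ s * ψ x) = mellin ψ (s + 1) := by
  simp [mellin, add_sub_cancel_right, smul_eq_mul]

lemma diffAt {ψ : ℝ → ℂ} (hψ : Continuous ψ) (hc : HasCompactSupport ψ) {s : ℂ}
    (hs : -1 < s.re) :
    DifferentiableAt ℂ (fun z : ℂ => ∫ x in Ioi (0:ℝ), (x : ℂ) ^ z * ψ x) s := by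
  have h1 : DifferentiableAt ℂ (mellin ψ) (s + 1) :=
    mellin_differentiableAt_of_isBigO_rpow (a := s.re + 2) (b := 0)
      (hψ.locallyIntegrable.locallyIntegrableOn _) (bigO_top hc _) (by simp only [Complex.add_re, Complex.one_re]; linarith)
      (bigO_zero hψ) (by simp only [Complex.add_re, Complex.one_re]; linarith)
  have h2 : DifferentiableAt ℂ (fun z : ℂ => mellin ψ (z + 1)) s :=
    h1.comp (f := fun z : ℂ => z + 1) s ((differentiableAt_id.add_const (1:ℂ)))
  exact h2.congr_of_eventuallyEq (Eventually.of_forall fun z => integral_eq_mellin z)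


lemma ftc {ψ : ℝ → ℂ} (hψ : ContDiff ℝ ∞ ψ) (hc : HasCompactSupport ψ) :
    (∫ x in Ioi (0:ℝ), deriv ψ x) = -ψ 0 := by
  have hd : Continuous (deriv ψ) := hψ.continuous_deriv (by exact_mod_cast le_top)
  have h := integral_Ioi_of_hasDerivAt_of_tendsto (f := ψ) (f' := deriv ψ) (a := 0) (m := 0)
    (hψ.continuous.continuousWithinAt)
    (fun x _ => ((hψ.differentiable (by simp)) x).hasDerivAt)
    ((hd.integrable_of_hasCompactSupport hc.deriv).integrableOn)
    ((tendsto_const_nhds.congr' ?_))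
  · rw [h, zero_sub]
  · filter_upwards [ev_top hc] with x hx using hx.symm

lemma ibp {ψ : ℝ → ℂ} (hψ : ContDiff ℝ ∞ ψ) (hc : HasCompactSupport ψ) {s : ℂ}
    (hs : -1 < s.re) :
    (s + 1) * ∫ x in Ioi (0:ℝ), (x : ℂ) ^ s * ψ x
      = -∫ x in Ioi (0:ℝ), (x : ℂ) ^ (s + 1) * deriv ψ x := by
  have hs1 : 0 < (s + 1).re := by simp only [Complex.add_re, Complex.one_re]; linarith
  have hs1' : s + 1 ≠ 0 := fun h => by rw [h] at hs1; simp at hs1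
  set F : ℝ → ℂ := fun x => (x : ℂ) ^ (s + 1) * ψ x with hF
  set F' : ℝ → ℂ := fun x => (s + 1) * ((x : ℂ) ^ s * ψ x) + (x : ℂ) ^ (s + 1) * deriv ψ x with hF'
  have hder : ∀ x ∈ Ioi (0:ℝ), HasDerivAt F (F' x) x := by
    intro x hx
    have h1 : HasDerivAt (fun y : ℝ => (y : ℂ) ^ (s + 1) / (s + 1)) ((x : ℂ) ^ s) x :=
      hasDerivAt_ofReal_cpow_const' (ne_of_gt hx) (fun h => by
        rw [h] at hs; simp at hs)
    have h2 : HasDerivAt (fun y : ℝ => (y : ℂ) ^ (s + 1)) ((s + 1) * (x : ℂ) ^ s) x := by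
      have h3 := h1.const_mul (s + 1)
      refine h3.congr_of_eventuallyEq (Eventually.of_forall fun y => ?_)
      field_simp
    have h4 := h2.mul ((hψ.differentiable (by simp)) x).hasDerivAt
    refine h4.congr_deriv ?_
    simp only [hF']; ring
  have hcont : ContinuousWithinAt F (Ici 0) 0 := by
    refine ContinuousAt.continuousWithinAt ?_
    exact ((continuousAt_ofReal_cpow_const 0 (s + 1) (Or.inl hs1)).mul hψ.continuous.continuousAt)
  have hF0 : F 0 = 0 := by
    simp [hF, Complex.ofReal_zero, Complex.zero_cpow hs1']
  have hI1 : IntegrableOn (fun x : ℝ => (x : ℂ) ^ s * ψ x) (Ioi 0) :=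
    integrableOn hψ.continuous hc hs
  have hI2 : IntegrableOn (fun x : ℝ => (x : ℂ) ^ (s + 1) * deriv ψ x) (Ioi 0) :=
    integrableOn (hψ.continuous_deriv (by exact_mod_cast le_top)) hc.deriv
      (by simp only [Complex.add_re, Complex.one_re]; linarith)
  have hint : IntegrableOn F' (Ioi 0) := (hI1.const_mul _).add hI2
  have htop : Tendsto F atTop (𝓝 0) := by
    refine tendsto_const_nhds.congr' ?_
    filter_upwards [ev_top hc] with x hx
    simp [hF, hx]
  have h0 := integral_Ioi_of_hasDerivAt_of_tendsto hcont hder hint htop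
  rw [hF0, sub_zero] at h0
  have h1 : (∫ x in Ioi (0:ℝ), F' x)
      = (s + 1) * (∫ x in Ioi (0:ℝ), (x : ℂ) ^ s * ψ x)
        + ∫ x in Ioi (0:ℝ), (x : ℂ) ^ (s + 1) * deriv ψ x := by
    rw [integral_add (hI1.const_mul _) hI2, integral_const_mul]
  rw [h0] at h1
  linear_combination -h1


noncomputable def Hf (φ : ℝ → ℂ) (n : ℕ) (s : ℂ) : ℂ :=
  ∫ x in Ioi (0:ℝ), (x : ℂ) ^ (s + n) * iteratedDeriv n φ x

noncomputable def Pf (n : ℕ) (s : ℂ) : ℂ := ∏ j ∈ Finset.range n, (s + ((j : ℂ) + 1))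

noncomputable def Gf (φ : ℝ → ℂ) (n : ℕ) (s : ℂ) : ℂ := (-1) ^ n / Pf n s * Hf φ n s

noncomputable def Nf (s : ℂ) : ℕ := ⌊max 0 (-s.re)⌋₊

variable {φ : ℝ → ℂ}

lemma Dsmooth (hφ : ContDiff ℝ ∞ φ) (n : ℕ) : ContDiff ℝ ∞ (iteratedDeriv n φ) := by
  rw [iteratedDeriv_eq_iterate]; exact hφ.iterate_deriv n

lemma Dsupp (hsupp : HasCompactSupport φ) (n : ℕ) :
    HasCompactSupport (iteratedDeriv n φ) := by
  induction n with
  | zero => simpa [iteratedDeriv_zero] using hsupp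
  | succ n ih => rw [iteratedDeriv_succ]; exact ih.deriv

lemma Nf_lt (s : ℂ) : -(Nf s : ℝ) - 1 < s.re := by
  have h1 := Nat.lt_floor_add_one (max 0 (-s.re))
  have h2 : -s.re ≤ max 0 (-s.re) := le_max_right _ _
  have h3 : (Nf s : ℝ) = (⌊max 0 (-s.re)⌋₊ : ℝ) := rfl
  linarith

lemma step (hφ : ContDiff ℝ ∞ φ) (hsupp : HasCompactSupport φ) (n : ℕ) {s : ℂ}
    (hs : -(n : ℝ) - 1 < s.re) :
    Hf φ (n + 1) s = -(s + (n : ℂ) + 1) * Hf φ n s := by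
  have h := ibp (Dsmooth hφ n) (Dsupp hsupp n) (s := s + n)
    (by simp only [Complex.add_re, Complex.natCast_re]; linarith)
  unfold Hf
  rw [iteratedDeriv_succ]
  push_cast
  rw [show s + ((n : ℂ) + 1) = s + n + 1 by ring]
  linear_combination h

lemma Gstep (hφ : ContDiff ℝ ∞ φ) (hsupp : HasCompactSupport φ) (n : ℕ) {s : ℂ}
    (hs : -(n : ℝ) - 1 < s.re) : Gf φ (n + 1) s = Gf φ n s := by
  have hc : s + ((n : ℂ) + 1) ≠ 0 := by
    intro h
    have := congrArg Complex.re h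
    simp only [Complex.add_re, Complex.natCast_re, Complex.one_re, Complex.zero_re] at this
    linarith
  unfold Gf
  rw [show Pf (n + 1) s = Pf n s * (s + ((n : ℂ) + 1)) from Finset.prod_range_succ _ _,
    step hφ hsupp n hs]
  by_cases hP : Pf n s = 0
  · simp [hP]
  · have h1 : s + (n : ℂ) + 1 = s + ((n : ℂ) + 1) := by ring
    rw [h1]
    field_simp
    ring

lemma agree (hφ : ContDiff ℝ ∞ φ) (hsupp : HasCompactSupport φ) {m n : ℕ} (hmn : m ≤ n) {s : ℂ}
    (hs : -(m : ℝ) - 1 < s.re) : Gf φ n s = Gf φ m s := by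
  induction n with
  | zero => obtain rfl : m = 0 := by omega
            rfl
  | succ n ih =>
    rcases eq_or_lt_of_le hmn with rfl | hlt
    · rfl
    · have hmn' : m ≤ n := by omega
      have hcast : (m : ℝ) ≤ (n : ℝ) := Nat.cast_le.mpr hmn'
      rw [Gstep hφ hsupp n (by linarith), ih hmn']

lemma gEq (hφ : ContDiff ℝ ∞ φ) (hsupp : HasCompactSupport φ) (n : ℕ) {s : ℂ}
    (hs : -(n : ℝ) - 1 < s.re) : Gf φ (Nf s) s = Gf φ n s := by
  rcases le_total n (Nf s) with h | h
  · exact agree hφ hsupp h hs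
  · exact (agree hφ hsupp h (Nf_lt s)).symm

lemma Hdiff (hφ : ContDiff ℝ ∞ φ) (hsupp : HasCompactSupport φ) (n : ℕ) {s : ℂ}
    (hs : -(n : ℝ) - 1 < s.re) : DifferentiableAt ℂ (Hf φ n) s := by
  have h := diffAt (Dsmooth hφ n).continuous (Dsupp hsupp n) (s := s + n)
    (by simp only [Complex.add_re, Complex.natCast_re]; linarith)
  have h2 := h.comp s (differentiableAt_id.add_const (n : ℂ))
  exact h2.congr_of_eventuallyEq (Eventually.of_forall fun z => rfl)

lemma Pf_cont (n : ℕ) : Continuous (Pf n) :=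
  continuous_finset_prod _ fun _ _ => continuous_id.add continuous_const

lemma Pf_diff (n : ℕ) : Differentiable ℂ (Pf n) :=
  Differentiable.fun_finsetProd fun _ _ => differentiable_id.add_const _

lemma Pf_ne (n : ℕ) {s : ℂ} (h : ∀ j < n, s ≠ -((j : ℂ) + 1)) : Pf n s ≠ 0 :=
  Finset.prod_ne_zero_iff.mpr fun j hj h0 =>
    h j (Finset.mem_range.mp hj) (eq_neg_of_add_eq_zero_left h0)

lemma prod_sub : ∀ m : ℕ, (∏ j ∈ Finset.range m, ((j : ℂ) - (m : ℂ)))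
    = (-1) ^ m * (m.factorial : ℂ)
  | 0 => by simp
  | (m + 1) => by
    rw [Finset.prod_range_succ']
    have h2 : (∏ j ∈ Finset.range m, (((j + 1 : ℕ) : ℂ) - ((m + 1 : ℕ) : ℂ)))
        = ∏ j ∈ Finset.range m, ((j : ℂ) - (m : ℂ)) :=
      Finset.prod_congr rfl fun j _ => by push_cast; ring
    rw [h2, prod_sub m]
    push_cast [Nat.factorial_succ]
    ring

end Stmt5Aux

open MeasureTheory

/-- The distribution-valued map `s ↦ (x₊^s, ·)` extends meromorphically to `ℂ`
with only simple poles at `s = -1, -2, …`; the residue at `s = -k` is the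
distribution `φ ↦ φ^{(k-1)}(0)/(k-1)!`. -/
theorem stmt_5 (φ : ℝ → ℂ) (hφ : ContDiff ℝ (⊤ : ℕ∞) φ) (hsupp : HasCompactSupport φ) :
    ∃ g : ℂ → ℂ,
      (∀ s : ℂ, (¬ ∃ k : ℕ, 1 ≤ k ∧ s = -(k : ℂ)) → AnalyticAt ℂ g s) ∧
      (∀ s : ℂ, -1 < s.re →
        g s = ∫ x in Set.Ioi (0 : ℝ), (x : ℂ) ^ s * φ x) ∧
      (∀ k : ℕ, 1 ≤ k →
        Filter.Tendsto (fun s : ℂ => (s + (k : ℂ)) * g s)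
          (nhdsWithin (-(k : ℂ)) {-(k : ℂ)}ᶜ)
          (nhds (iteratedDeriv (k - 1) φ 0 / (Nat.factorial (k - 1))))) := by
  classical
  open Stmt5Aux Set Filter Complex Topology in
  have hφ' : ContDiff ℝ ∞ φ := hφ.of_le (by simp)
  refine ⟨fun s => Stmt5Aux.Gf φ (Stmt5Aux.Nf s) s, ?_, ?_, ?_⟩
  · -- analyticity away from negative integers
    intro s0 hs0
    set n := Stmt5Aux.Nf s0 with hn
    set U : Set ℂ := {s | -(n : ℝ) - 1 < s.re} ∩
      ⋂ j ∈ Finset.range n, {-((j : ℂ) + 1)}ᶜ with hU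
    have hUopen : IsOpen U :=
      (isOpen_lt continuous_const Complex.continuous_re).inter
        (isOpen_biInter_finset fun j _ => isOpen_compl_singleton)
    have hs0U : s0 ∈ U := by
      constructor
      · exact Stmt5Aux.Nf_lt s0
      · simp only [Set.mem_iInter, Set.mem_compl_iff, Set.mem_singleton_iff]
        intro j hj h
        exact hs0 ⟨j + 1, by omega, by push_cast [h]; ring⟩
    have hdiff : DifferentiableOn ℂ (Stmt5Aux.Gf φ n) U := by
      intro s hs
      refine DifferentiableAt.differentiableWithinAt ?_
      have hPne : Stmt5Aux.Pf n s ≠ 0 := by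
        refine Stmt5Aux.Pf_ne n fun j hj => ?_
        have h2 := hs.2
        simp only [Set.mem_iInter, Set.mem_compl_iff, Set.mem_singleton_iff] at h2
        exact h2 j (Finset.mem_range.mpr hj)
      exact ((differentiableAt_const _).div ((Stmt5Aux.Pf_diff n) s) hPne).mul
        (Stmt5Aux.Hdiff hφ' hsupp n hs.1)
    have hA : AnalyticAt ℂ (Stmt5Aux.Gf φ n) s0 := hdiff.analyticAt (hUopen.mem_nhds hs0U)
    refine hA.congr ?_
    filter_upwards [hUopen.mem_nhds hs0U] with s hs
    exact (Stmt5Aux.gEq hφ' hsupp n hs.1).symm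
  · -- value on Re s > -1
    intro s hs
    show Stmt5Aux.Gf φ (Stmt5Aux.Nf s) s = _
    rw [Stmt5Aux.gEq hφ' hsupp 0 (by simpa using hs)]
    simp [Stmt5Aux.Gf, Stmt5Aux.Pf, Stmt5Aux.Hf, iteratedDeriv_zero]
  · -- residues
    intro k hk
    obtain ⟨m, rfl⟩ : ∃ m, k = m + 1 := ⟨k - 1, (Nat.succ_pred_eq_of_pos hk).symm⟩
    simp only [Nat.add_sub_cancel]
    push_cast
    have hPval : Stmt5Aux.Pf m (-((m : ℂ) + 1)) = (-1) ^ m * (m.factorial : ℂ) := by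
      rw [← Stmt5Aux.prod_sub m]
      exact Finset.prod_congr rfl fun j _ => by ring
    have hPne : Stmt5Aux.Pf m (-((m : ℂ) + 1)) ≠ 0 := by
      rw [hPval]
      exact mul_ne_zero (pow_ne_zero _ (by norm_num))
        (Nat.cast_ne_zero.mpr m.factorial_ne_zero)
    have hHval : Stmt5Aux.Hf φ (m + 1) (-((m : ℂ) + 1)) = -(iteratedDeriv m φ 0) := by
      have h1 : Stmt5Aux.Hf φ (m + 1) (-((m : ℂ) + 1))
          = ∫ x in Set.Ioi (0 : ℝ), deriv (iteratedDeriv m φ) x := by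
        unfold Stmt5Aux.Hf
        rw [iteratedDeriv_succ]
        refine setIntegral_congr_fun measurableSet_Ioi fun x hx => ?_
        rw [show -((m : ℂ) + 1) + ((m + 1 : ℕ) : ℂ) = 0 by push_cast; ring,
          Complex.cpow_zero, one_mul]
      rw [h1, Stmt5Aux.ftc (Stmt5Aux.Dsmooth hφ' m) (Stmt5Aux.Dsupp hsupp m)]
    have hT : Filter.Tendsto
        (fun s : ℂ => (-1 : ℂ) ^ (m + 1) * Stmt5Aux.Hf φ (m + 1) s / Stmt5Aux.Pf m s)
        (nhds (-((m : ℂ) + 1)))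
        (nhds ((-1 : ℂ) ^ (m + 1) * Stmt5Aux.Hf φ (m + 1) (-((m : ℂ) + 1))
          / Stmt5Aux.Pf m (-((m : ℂ) + 1)))) := by
      refine Filter.Tendsto.div (Filter.Tendsto.const_mul _ ?_)
        ((Stmt5Aux.Pf_cont m).tendsto _) hPne
      have := Stmt5Aux.Hdiff hφ' hsupp (m + 1) (s := -((m : ℂ) + 1))
        (by simp; linarith)
      exact this.continuousAt
    have hLeq : (-1 : ℂ) ^ (m + 1) * Stmt5Aux.Hf φ (m + 1) (-((m : ℂ) + 1))
        / Stmt5Aux.Pf m (-((m : ℂ) + 1)) = iteratedDeriv m φ 0 / (m.factorial : ℂ) := by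
      rw [hHval, hPval, pow_succ]
      have h1 : ((-1 : ℂ)) ^ m ≠ 0 := pow_ne_zero _ (by norm_num)
      have h2 : ((m.factorial : ℂ)) ≠ 0 := Nat.cast_ne_zero.mpr m.factorial_ne_zero
      field_simp
    rw [← hLeq]
    refine Filter.Tendsto.congr' ?_ (hT.mono_left nhdsWithin_le_nhds)
    have hre : ∀ᶠ s : ℂ in nhdsWithin (-((m : ℂ) + 1)) {-((m : ℂ) + 1)}ᶜ,
        -((m : ℝ) + 1) - 1 < s.re := by
      refine eventually_nhdsWithin_of_eventually_nhds ?_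
      have hopen : IsOpen {s : ℂ | -((m : ℝ) + 1) - 1 < s.re} :=
        isOpen_lt continuous_const Complex.continuous_re
      have hmem : (-((m : ℂ) + 1)) ∈ {s : ℂ | -((m : ℝ) + 1) - 1 < s.re} := by
        simp only [Set.mem_setOf_eq]
        simp
        linarith
      exact hopen.eventually_mem hmem
    filter_upwards [hre, self_mem_nhdsWithin] with s hs1 hs2
    have hs2' : s ≠ -((m : ℂ) + 1) := hs2
    have hg : Stmt5Aux.Gf φ (Stmt5Aux.Nf s) s = Stmt5Aux.Gf φ (m + 1) s :=
      Stmt5Aux.gEq hφ' hsupp (m + 1) (by push_cast; linarith)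
    show _ = (s + ((m : ℂ) + 1)) * Stmt5Aux.Gf φ (Stmt5Aux.Nf s) s
    rw [hg]
    unfold Stmt5Aux.Gf
    rw [show Stmt5Aux.Pf (m + 1) s = Stmt5Aux.Pf m s * (s + ((m : ℂ) + 1)) from
      Finset.prod_range_succ _ _]
    have hsne : s + ((m : ℂ) + 1) ≠ 0 := fun h => hs2' (eq_neg_of_add_eq_zero_left h)
    by_cases hP : Stmt5Aux.Pf m s = 0
    · simp [hP]
    · field_simp
end

section
/- Let f : ℝⁿ → ℂ be a polynomial with f not constant, and φ ∈ 𝒮(ℝⁿ) a Schwartz function. Then the integral Z_φ(s, f) = ∫_{ℝⁿ \ f⁻¹(0)} φ(x) |f(x)|^s dx converges absolutely for every complex s with Re(s) > 0, and s ↦ Z_φ(s, f) is holomorphic on the half-plane Re(s) > 0. -/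
/-!
On `{f ≠ 0}` one has `‖φ x * |f x| ^ s‖ = ‖φ x‖ * |f x| ^ (Re s)`. Since `|f x| ^ r` grows at most
polynomially for `r ≥ 0` and `φ` decays faster than any polynomial, `‖φ‖ * |f| ^ r` is
integrable, which gives absolute convergence. The `s`-derivative of the integrand is
`φ x * |f x| ^ s * log |f x|`, and `|log t| ≤ (t ^ (-ε) + t ^ ε) / ε` bounds it, uniformly for
`s` near `s₀`, by `‖φ‖ * (|f| ^ (Re s₀ - 2ε) + |f| ^ (Re s₀ + 2ε))`, which is integrable as soon
as `2ε < Re s₀`; differentiating under the integral sign then gives holomorphy.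
-/

open MeasureTheory

theorem MvPolynomial.exists_abs_eval_le_mul_one_add_norm_pow {σ : Type*} [Fintype σ]
    (f : MvPolynomial σ ℝ) :
    ∃ C : ℝ, ∀ x : σ → ℝ, |eval x f| ≤ C * (1 + ‖x‖) ^ f.totalDegree := by
  refine ⟨∑ m ∈ f.support, |f.coeff m|, fun x ↦ ?_⟩
  have h1 : (1 : ℝ) ≤ 1 + ‖x‖ := le_add_of_nonneg_right (norm_nonneg x)
  rw [eval_eq, Finset.sum_mul]
  refine (Finset.abs_sum_le_sum_abs _ _).trans (Finset.sum_le_sum fun m hm ↦ ?_)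
  rw [abs_mul]
  gcongr
  calc |∏ i ∈ m.support, x i ^ m i| = ∏ i ∈ m.support, |x i| ^ m i := by
        simp only [Finset.abs_prod, abs_pow]
    _ ≤ ∏ i ∈ m.support, (1 + ‖x‖) ^ m i := by
        gcongr with i
        exact (norm_le_pi_norm x i).trans (le_add_of_nonneg_left zero_le_one)
    _ = (1 + ‖x‖) ^ (∑ i ∈ m.support, m i) := Finset.prod_pow_eq_pow_sum _ _ _
    _ ≤ (1 + ‖x‖) ^ f.totalDegree := pow_le_pow_right₀ h1 (le_totalDegree hm)

namespace SchwartzMap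

variable {D V : Type*} [NormedAddCommGroup D] [NormedSpace ℝ D] [MeasurableSpace D]
  [BorelSpace D] [SecondCountableTopology D] [NormedAddCommGroup V] [NormedSpace ℝ V]
  {μ : Measure D} [μ.HasTemperateGrowth]

theorem integrable_one_add_norm_pow_mul (φ : 𝓢(D, V)) (k : ℕ) :
    Integrable (fun x ↦ (1 + ‖x‖) ^ k * ‖φ x‖) μ := by
  refine (((φ.integrable_pow_mul μ 0).add (φ.integrable_pow_mul μ k)).const_mul
    (2 ^ (k - 1))).mono' (by fun_prop) (.of_forall fun x ↦ ?_)
  rw [Real.norm_of_nonneg (by positivity), Pi.add_apply, ← add_mul, ← mul_assoc]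
  gcongr
  simpa using add_pow_le zero_le_one (norm_nonneg x) k

theorem integrable_norm_mul_abs_rpow (φ : 𝓢(D, V)) {g : D → ℝ} (hg : AEMeasurable g μ)
    {C : ℝ} {d : ℕ} (hg_le : ∀ x, |g x| ≤ C * (1 + ‖x‖) ^ d) {r : ℝ} (hr : 0 ≤ r) :
    Integrable (fun x ↦ ‖φ x‖ * |g x| ^ r) μ := by
  set k := ⌈r⌉₊
  refine ((φ.integrable_one_add_norm_pow_mul (μ := μ) (d * k)).const_mul (max C 1 ^ k)).mono'
    (φ.continuous.norm.aestronglyMeasurable.mul (hg.abs.pow_const r).aestronglyMeasurable)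
    (.of_forall fun x ↦ ?_)
  have hB : 1 ≤ max C 1 * (1 + ‖x‖) ^ d :=
    one_le_mul_of_one_le_of_one_le (le_max_right _ _)
      (one_le_pow₀ (le_add_of_nonneg_right (norm_nonneg x)))
  calc ‖‖φ x‖ * |g x| ^ r‖ = ‖φ x‖ * |g x| ^ r := Real.norm_of_nonneg (by positivity)
    _ ≤ ‖φ x‖ * (max C 1 * (1 + ‖x‖) ^ d) ^ r := by
        gcongr
        exact (hg_le x).trans (by gcongr; exact le_max_left _ _)
    _ ≤ ‖φ x‖ * (max C 1 * (1 + ‖x‖) ^ d) ^ k := by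
        gcongr
        exact (Real.rpow_le_rpow_of_exponent_le hB (Nat.le_ceil r)).trans_eq
          (Real.rpow_natCast _ _)
    _ = max C 1 ^ k * ((1 + ‖x‖) ^ (d * k) * ‖φ x‖) := by ring

end SchwartzMap

namespace Real

theorem rpow_le_rpow_add_rpow {t a r b : ℝ} (ht : 0 < t) (har : a ≤ r) (hrb : r ≤ b) :
    t ^ r ≤ t ^ a + t ^ b := by
  rcases le_total t 1 with h | h
  · linarith [rpow_le_rpow_of_exponent_ge ht h har, rpow_nonneg ht.le b]
  · linarith [rpow_le_rpow_of_exponent_le h hrb, rpow_nonneg ht.le a]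

theorem abs_log_le_rpow_neg_add_rpow_div {t ε : ℝ} (ht : 0 < t) (hε : 0 < ε) :
    |log t| ≤ (t ^ (-ε) + t ^ ε) / ε := by
  rcases le_total 1 t with h | h
  · rw [abs_of_nonneg (log_nonneg h)]
    refine (log_le_rpow_div ht.le hε).trans ?_
    gcongr
    exact le_add_of_nonneg_left (rpow_nonneg ht.le _)
  · rw [abs_of_nonpos (log_nonpos ht.le h), ← log_inv]
    refine (log_le_rpow_div (inv_nonneg.mpr ht.le) hε).trans ?_
    rw [inv_rpow ht.le, ← rpow_neg ht.le]
    gcongr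
    exact le_add_of_nonneg_right (rpow_nonneg ht.le _)

theorem rpow_mul_abs_log_le {t ε σ r : ℝ} (ht : 0 < t) (hε : 0 < ε) (hr : |r - σ| ≤ ε) :
    t ^ r * |log t| ≤ 2 / ε * (t ^ (σ - 2 * ε) + t ^ (σ + 2 * ε)) := by
  obtain ⟨hr₁, hr₂⟩ := abs_le.mp hr
  have h₁ := rpow_le_rpow_add_rpow ht (a := σ - 2 * ε) (r := r - ε) (b := σ + 2 * ε)
    (by linarith) (by linarith)
  have h₂ := rpow_le_rpow_add_rpow ht (a := σ - 2 * ε) (r := r + ε) (b := σ + 2 * ε)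
    (by linarith) (by linarith)
  calc t ^ r * |log t| ≤ t ^ r * ((t ^ (-ε) + t ^ ε) / ε) := by
        gcongr
        exact abs_log_le_rpow_neg_add_rpow_div ht hε
    _ = (t ^ (r - ε) + t ^ (r + ε)) / ε := by
        rw [sub_eq_add_neg, rpow_add ht, rpow_add ht]
        ring
    _ ≤ 2 * (t ^ (σ - 2 * ε) + t ^ (σ + 2 * ε)) / ε := by gcongr; linarith
    _ = 2 / ε * (t ^ (σ - 2 * ε) + t ^ (σ + 2 * ε)) := by ring

end Real

theorem Complex.norm_ofReal_cpow_mul_log {t : ℝ} (ht : 0 < t) (s : ℂ) :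
    ‖(t : ℂ) ^ s * log t‖ = t ^ s.re * |Real.log t| := by
  rw [norm_mul, norm_cpow_eq_rpow_re_of_pos ht, ← ofReal_log ht.le, norm_real, Real.norm_eq_abs]

section ZetaIntegral

variable {α : Type*} [MeasurableSpace α] {μ : Measure α} {ψ : α → ℂ} {t : α → ℝ}

theorem integrable_mul_ofReal_cpow (hψ : AEStronglyMeasurable ψ μ) (ht : AEMeasurable t μ)
    (ht_pos : ∀ᵐ x ∂μ, 0 < t x) {s : ℂ} (hint : Integrable (fun x ↦ ‖ψ x‖ * t x ^ s.re) μ) :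
    Integrable (fun x ↦ ψ x * (t x : ℂ) ^ s) μ := by
  refine hint.mono' (hψ.mul ?_) ?_
  · exact ((Complex.measurable_ofReal.comp_aemeasurable ht).pow_const s).aestronglyMeasurable
  · filter_upwards [ht_pos] with x hx
    rw [norm_mul, Complex.norm_cpow_eq_rpow_re_of_pos hx]

theorem differentiableOn_integral_mul_ofReal_cpow (hψ : AEStronglyMeasurable ψ μ)
    (ht : AEMeasurable t μ) (ht_pos : ∀ᵐ x ∂μ, 0 < t x) {U : Set ℝ} (hU : IsOpen U)
    (hint : ∀ r ∈ U, Integrable (fun x ↦ ‖ψ x‖ * t x ^ r) μ) :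
    DifferentiableOn ℂ (fun s : ℂ ↦ ∫ x, ψ x * (t x : ℂ) ^ s ∂μ) (Complex.re ⁻¹' U) := by
  intro s₀ hs₀
  obtain ⟨δ, hδ, hball⟩ := Metric.isOpen_iff.mp hU _ hs₀
  obtain ⟨ε, hε, hεδ⟩ : ∃ ε, 0 < ε ∧ 2 * ε < δ := ⟨δ / 3, by positivity, by linarith⟩
  set σ := s₀.re
  have hmem : ∀ c : ℝ, |c| ≤ 2 → σ + c * ε ∈ U := fun c hc ↦ hball <| by
    rw [Metric.mem_ball, Real.dist_eq, add_sub_cancel_left, abs_mul, abs_of_pos hε]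
    nlinarith
  have htC : AEMeasurable (fun x ↦ (t x : ℂ)) μ := Complex.measurable_ofReal.comp_aemeasurable ht
  have key := hasDerivAt_integral_of_dominated_loc_of_deriv_le
    (F' := fun s x ↦ ψ x * ((t x : ℂ) ^ s * Complex.log (t x)))
    (bound := fun x ↦ 2 / ε * (‖ψ x‖ * t x ^ (σ - 2 * ε) + ‖ψ x‖ * t x ^ (σ + 2 * ε)))
    (Metric.ball_mem_nhds s₀ hε)
    (.of_forall fun s ↦ hψ.mul (htC.pow_const s).aestronglyMeasurable)
    (integrable_mul_ofReal_cpow hψ ht ht_pos (hint σ (by simpa using hmem 0 (by norm_num))))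
    (hψ.mul ((htC.pow_const s₀).mul
      (Complex.measurable_log.comp_aemeasurable htC)).aestronglyMeasurable)
    ?bound ?bound_integrable ?diff
  · exact key.2.differentiableAt.differentiableWithinAt
  case bound =>
    filter_upwards [ht_pos] with x hx s hs
    have hre : |s.re - σ| ≤ ε := by
      rw [← Complex.sub_re]
      exact (Complex.abs_re_le_norm _).trans (le_of_lt (by simpa [dist_eq_norm] using hs))
    rw [norm_mul, Complex.norm_ofReal_cpow_mul_log hx]
    calc _ ≤ ‖ψ x‖ * (2 / ε * (t x ^ (σ - 2 * ε) + t x ^ (σ + 2 * ε))) :=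
          mul_le_mul_of_nonneg_left (Real.rpow_mul_abs_log_le hx hε hre) (norm_nonneg _)
      _ = _ := by ring
  case bound_integrable =>
    refine ((hint _ ?_).add (hint _ ?_)).const_mul _
    · simpa [sub_eq_add_neg] using hmem (-2) (by norm_num)
    · exact hmem 2 (by norm_num)
  case diff =>
    filter_upwards [ht_pos] with x hx s _
    exact ((Complex.hasStrictDerivAt_const_cpow
      (Or.inl (Complex.ofReal_ne_zero.mpr hx.ne'))).hasDerivAt).const_mul (ψ x)

end ZetaIntegral

theorem stmt_6_general (n : ℕ) (f : MvPolynomial (Fin n) ℝ)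
    (φ : SchwartzMap (Fin n → ℝ) ℂ) :
    (∀ s : ℂ, 0 < s.re →
      IntegrableOn
        (fun x : Fin n → ℝ => φ x * ((|MvPolynomial.eval x f| : ℝ) : ℂ) ^ s)
        {x : Fin n → ℝ | MvPolynomial.eval x f ≠ 0} volume) ∧
    DifferentiableOn ℂ
      (fun s : ℂ =>
        ∫ x in {x : Fin n → ℝ | MvPolynomial.eval x f ≠ 0},
          φ x * ((|MvPolynomial.eval x f| : ℝ) : ℂ) ^ s)
      {s : ℂ | 0 < s.re} := by
  set S := {x : Fin n → ℝ | MvPolynomial.eval x f ≠ 0}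
  have heval : Continuous fun x : Fin n → ℝ ↦ MvPolynomial.eval x f :=
    MvPolynomial.continuous_eval f
  have hS : MeasurableSet S := heval.measurable (measurableSet_singleton 0).compl
  have hpos : ∀ᵐ x ∂volume.restrict S, 0 < |MvPolynomial.eval x f| := by
    filter_upwards [ae_restrict_mem hS] with x hx using abs_pos.mpr hx
  obtain ⟨C, hC⟩ := f.exists_abs_eval_le_mul_one_add_norm_pow
  have hint : ∀ r ∈ Set.Ioi (0 : ℝ),
      Integrable (fun x ↦ ‖φ x‖ * |MvPolynomial.eval x f| ^ r) (volume.restrict S) :=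
    fun r hr ↦ (φ.integrable_norm_mul_abs_rpow heval.aemeasurable hC (le_of_lt hr)).restrict
  exact ⟨fun s hs ↦ integrable_mul_ofReal_cpow φ.continuous.aestronglyMeasurable
      heval.abs.aemeasurable hpos (hint s.re hs),
    differentiableOn_integral_mul_ofReal_cpow φ.continuous.aestronglyMeasurable
      heval.abs.aemeasurable hpos isOpen_Ioi hint⟩

/-- For a nonconstant real polynomial `f` in `n` variables and a Schwartz
function `φ`, the zeta integral `Z_φ(s,f) = ∫_{f ≠ 0} φ(x) |f(x)|^s dx`
converges absolutely for `Re s > 0` and is holomorphic there. -/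
theorem stmt_6 (n : ℕ) (f : MvPolynomial (Fin n) ℝ) (hf : 0 < f.totalDegree)
    (φ : SchwartzMap (Fin n → ℝ) ℂ) :
    (∀ s : ℂ, 0 < s.re →
      IntegrableOn
        (fun x : Fin n → ℝ => φ x * ((|MvPolynomial.eval x f| : ℝ) : ℂ) ^ s)
        {x : Fin n → ℝ | MvPolynomial.eval x f ≠ 0} volume) ∧
    DifferentiableOn ℂ
      (fun s : ℂ =>
        ∫ x in {x : Fin n → ℝ | MvPolynomial.eval x f ≠ 0},
          φ x * ((|MvPolynomial.eval x f| : ℝ) : ℂ) ^ s)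
      {s : ℂ | 0 < s.re} :=
  stmt_6_general n f φ
end

section
/- Suppose for each nonconstant real polynomial f there exists a tempered distribution T ∈ 𝒮'(ℝⁿ) with f·T = 1. Then every nonzero differential operator P with constant coefficients on ℝⁿ admits a fundamental solution: there exists S ∈ 𝒮'(ℝⁿ) with P S = δ₀. -/
open MeasureTheory

/-- Partial derivative in coordinate direction `i`. -/
noncomputable def pd {n : ℕ} (i : Fin n) (g : (Fin n → ℝ) → ℂ) : (Fin n → ℝ) → ℂ :=
  fun x => fderiv ℝ g x (Pi.single i 1)

/-- Iterated partial derivative `∂^k` for a multi-index `k`. -/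
noncomputable def pdPow {n : ℕ} (k : Fin n →₀ ℕ) (g : (Fin n → ℝ) → ℂ) :
    (Fin n → ℝ) → ℂ :=
  (List.finRange n).foldr (fun i h => (pd i)^[k i] h) g

/-! The inverse Fourier transform turns `∂^k` into multiplication by `(-2πi x)^k`, so it
intertwines `P` with multiplication by `f`. Hence if `f • T = 1` then `S = T ∘ 𝓕⁻` satisfies
`(P S)(φ) = T (f • 𝓕⁻ φ) = ∫ 𝓕⁻ φ = φ 0`. A nonzero constant `f = c` is inverted by `c⁻¹ ∫`. -/

open SchwartzMap LineDeriv
open scoped FourierTransform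

section MultiIter

variable {α β : Type*} {n : ℕ}

def multiIter (D : Fin n → α → α) (k : Fin n →₀ ℕ) (x : α) : α :=
  (List.finRange n).foldr (fun i y => (D i)^[k i] y) x

theorem map_multiIter {D : Fin n → α → α} {D' : Fin n → β → β} (h : α → β)
    (hD : ∀ i, Function.Semiconj h (D i) (D' i)) (k : Fin n →₀ ℕ) (x : α) :
    h (multiIter D k x) = multiIter D' k (h x) :=
  (List.foldr_hom h fun i y => ((hD i).iterate_right (k i) y).symm).symm

theorem multiIter_smul {M : Type*} [CommMonoid M] [MulAction M β] (a : Fin n → M)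
    (k : Fin n →₀ ℕ) (x : β) :
    multiIter (fun i y => a i • y) k x = (∏ i, a i ^ k i) • x := by
  rw [multiIter, Fin.prod_univ_def]
  induction List.finRange n with
  | nil => simp
  | cons i l ih =>
    rw [List.foldr_cons, ih, smul_iterate, List.map_cons, List.prod_cons, mul_smul]

end MultiIter

section Fourier

variable {n : ℕ}

theorem coe_multiIter_lineDerivOp_single (k : Fin n →₀ ℕ) (φ : 𝓢(Fin n → ℝ, ℂ)) :
    ⇑(multiIter (fun i => ∂_{(Pi.single i 1 : Fin n → ℝ)}) k φ) = pdPow k φ :=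
  map_multiIter (fun g : 𝓢(Fin n → ℝ, ℂ) => ⇑g) (fun _ _ => rfl) k φ

theorem compCLMOfContinuousLinearEquiv_multiIter_lineDerivOp (𝕜 : Type*) [RCLike 𝕜]
    {D E F : Type*} [NormedAddCommGroup D] [NormedSpace ℝ D] [NormedAddCommGroup E]
    [NormedSpace ℝ E] [NormedAddCommGroup F] [NormedSpace ℝ F] [NormedSpace 𝕜 F]
    (g : D ≃L[ℝ] E) (v : Fin n → D) (k : Fin n →₀ ℕ) (f : 𝓢(E, F)) :
    compCLMOfContinuousLinearEquiv 𝕜 g (multiIter (fun i => ∂_{g (v i)}) k f) =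
      multiIter (fun i => ∂_{v i}) k (compCLMOfContinuousLinearEquiv 𝕜 g f) :=
  map_multiIter _ (fun i f => (lineDerivOp_compCLMOfContinuousLinearEquiv 𝕜 (v i) g f).symm) k f

theorem fourierInv_multiIter_lineDerivOp_apply {V F : Type*} [NormedAddCommGroup V]
    [InnerProductSpace ℝ V] [FiniteDimensional ℝ V] [MeasurableSpace V] [BorelSpace V]
    [NormedAddCommGroup F] [NormedSpace ℂ F] (v : Fin n → V) (k : Fin n →₀ ℕ) (f : 𝓢(V, F))
    (ξ : V) :
    𝓕⁻ (multiIter (fun i => ∂_{v i}) k f) ξ =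
      (∏ i, (-(2 * Real.pi * Complex.I) * inner ℝ ξ (v i)) ^ k i) • 𝓕⁻ f ξ := by
  have hD (i : Fin n) : Function.Semiconj (fun f : 𝓢(V, F) => 𝓕⁻ f ξ) (∂_{v i})
      (fun y => (-(2 * Real.pi * Complex.I) * inner ℝ ξ (v i)) • y) := fun f => by
    have : (inner ℝ · (v i)).HasTemperateGrowth := by fun_prop
    simp [fourierInv_lineDerivOp_eq, smulLeftCLM_apply_apply this, mul_smul]
  rw [map_multiIter _ hD, multiIter_smul]

end Fourier

section FourierPi

variable {n : ℕ}

-- Mathlib's Fourier transform needs an inner product space, so it is transported from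
-- `EuclideanSpace ℝ (Fin n)` along the coordinate equivalence.
noncomputable def fourierInvPi (n : ℕ) : 𝓢(Fin n → ℝ, ℂ) →L[ℂ] 𝓢(Fin n → ℝ, ℂ) :=
  compCLMOfContinuousLinearEquiv ℂ (EuclideanSpace.equiv (Fin n) ℝ).symm ∘L
    FourierTransform.fourierInvCLM ℂ 𝓢(EuclideanSpace ℝ (Fin n), ℂ) ∘L
      compCLMOfContinuousLinearEquiv ℂ (EuclideanSpace.equiv (Fin n) ℝ)

theorem fourierInvPi_multiIter_lineDerivOp_apply (k : Fin n →₀ ℕ) (φ : 𝓢(Fin n → ℝ, ℂ))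
    (x : Fin n → ℝ) :
    fourierInvPi n (multiIter (fun i => ∂_{(Pi.single i 1 : Fin n → ℝ)}) k φ) x =
      (∏ i, (-(2 * Real.pi * Complex.I) * x i) ^ k i) * fourierInvPi n φ x := by
  have hsingle : ∀ i, (Pi.single i 1 : Fin n → ℝ) =
      EuclideanSpace.equiv (Fin n) ℝ (EuclideanSpace.single i 1) := fun i => by
    ext j; simp [Pi.single_apply]
  simp only [hsingle]
  simp [fourierInvPi, compCLMOfContinuousLinearEquiv_multiIter_lineDerivOp,
    fourierInv_multiIter_lineDerivOp_apply, EuclideanSpace.inner_single_right]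

theorem integral_eq_fourier_apply_zero {V F : Type*} [NormedAddCommGroup V]
    [InnerProductSpace ℝ V] [FiniteDimensional ℝ V] [MeasurableSpace V] [BorelSpace V]
    [NormedAddCommGroup F] [NormedSpace ℂ F] (f : V → F) : ∫ v, f v = 𝓕 f 0 := by
  simp [Real.fourier_eq]

theorem integral_fourierInvPi (φ : 𝓢(Fin n → ℝ, ℂ)) : ∫ x, fourierInvPi n φ x = φ 0 := by
  set ψ := compCLMOfContinuousLinearEquiv ℂ (EuclideanSpace.equiv (Fin n) ℝ) φ
  calc ∫ x, fourierInvPi n φ x = ∫ x, 𝓕⁻ ψ (WithLp.toLp 2 x) := rfl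
    _ = ∫ y, 𝓕⁻ ψ y :=
      (PiLp.volume_preserving_toLp (Fin n)).integral_comp
        (MeasurableEquiv.toLp 2 _).measurableEmbedding _
    _ = 𝓕 (𝓕⁻ ψ) 0 := integral_eq_fourier_apply_zero _
    _ = φ 0 := by simp [ψ]

end FourierPi

section FundamentalSolution

variable {n : ℕ}

theorem zpow_neg_degree_mul_prod_neg_mul_pow {a : ℂ} (ha : a ≠ 0) (k : Fin n →₀ ℕ)
    (x : Fin n → ℂ) :
    a ^ (-((k.sum fun _ e => e) : ℤ)) * (-1) ^ (k.sum fun _ e => e) * ∏ i, (-a * x i) ^ k i =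
      ∏ i, x i ^ k i := by
  set d := k.sum fun _ e => e with hd
  have hsum : d = ∑ i, k i := Finsupp.sum_fintype _ _ fun _ => rfl
  have hz : a ^ (-((k.sum fun _ e => e) : ℤ)) = (a ^ d)⁻¹ := by
    rw [hd, ← Nat.cast_finsupp_sum, zpow_neg, zpow_natCast]
  rw [hz, Finset.prod_congr rfl fun i _ => mul_pow (-a) (x i) (k i), Finset.prod_mul_distrib,
    Finset.prod_pow_eq_pow_sum, ← hsum, neg_pow, ← mul_assoc]
  calc _ = ((-1) ^ d * (-1) ^ d : ℂ) * ((a ^ d)⁻¹ * a ^ d) * ∏ i, x i ^ k i := by ring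
    _ = ∏ i, x i ^ k i := by
      rw [← mul_pow, neg_one_mul, neg_neg, one_pow, inv_mul_cancel₀ (pow_ne_zero _ ha),
        one_mul, one_mul]

theorem sum_coeff_mul_symbol_eq_eval {a : ℂ} (ha : a ≠ 0) (f : MvPolynomial (Fin n) ℝ)
    (x : Fin n → ℝ) :
    ∑ k ∈ f.support, ((MvPolynomial.coeff k f : ℝ) : ℂ) * a ^ (-((k.sum fun _ e => e) : ℤ)) *
        (-1) ^ (k.sum fun _ e => e) * ∏ i, (-a * x i) ^ k i = (MvPolynomial.eval x f : ℂ) := by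
  rw [MvPolynomial.eval_eq', Complex.ofReal_sum]
  refine Finset.sum_congr rfl fun k _ => ?_
  rw [mul_assoc, mul_assoc, ← mul_assoc (a ^ _), zpow_neg_degree_mul_prod_neg_mul_pow ha]
  push_cast
  rfl

-- `f • T = 1` in `𝒮'`, with the constant function `1` acting by integration.
def MulEqOne (f : MvPolynomial (Fin n) ℝ) (T : 𝓢(Fin n → ℝ, ℂ) →L[ℂ] ℂ) : Prop :=
  ∀ φ ψ : 𝓢(Fin n → ℝ, ℂ), (∀ x, ψ x = (MvPolynomial.eval x f : ℂ) * φ x) → T ψ = ∫ x, φ x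

-- `P S = δ₀` for `P = ∑ c_k (2πi)^{-|k|} ∂^k`, where `f = ∑ c_k x^k` and `∂^k` acts on
-- distributions by `∂^k S = (-1)^{|k|} S ∘ ∂^k`.
def IsFundamentalSolution (f : MvPolynomial (Fin n) ℝ) (S : 𝓢(Fin n → ℝ, ℂ) →L[ℂ] ℂ) : Prop :=
  ∀ (φ : 𝓢(Fin n → ℝ, ℂ)) (ψ : (Fin n →₀ ℕ) → 𝓢(Fin n → ℝ, ℂ)),
    (∀ k ∈ f.support, ∀ x, ψ k x = pdPow k (fun y => φ y) x) →
    ∑ k ∈ f.support, ((MvPolynomial.coeff k f : ℝ) : ℂ) *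
        (2 * Real.pi * Complex.I) ^ (-((k.sum fun _ e => e) : ℤ)) *
        (-1 : ℂ) ^ (k.sum fun _ e => e) * S (ψ k) = φ 0

theorem mulEqOne_C {c : ℝ} (hc : c ≠ 0) :
    MulEqOne (MvPolynomial.C c : MvPolynomial (Fin n) ℝ) ((c : ℂ)⁻¹ • integralCLM ℂ volume) := by
  intro φ ψ hψ
  simp [hψ, integral_const_mul, Complex.ofReal_ne_zero.mpr hc]

theorem isFundamentalSolution_comp_fourierInvPi {f : MvPolynomial (Fin n) ℝ}
    {T : 𝓢(Fin n → ℝ, ℂ) →L[ℂ] ℂ} (hT : MulEqOne f T) :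
    IsFundamentalSolution f (T ∘L fourierInvPi n) := by
  intro φ ψ hψ
  have hψ_eq (k) (hk : k ∈ f.support) :
      ψ k = multiIter (fun i => ∂_{(Pi.single i 1 : Fin n → ℝ)}) k φ := by
    ext x; rw [hψ k hk x, coe_multiIter_lineDerivOp_single]
  set c : (Fin n →₀ ℕ) → ℂ := fun k => ((MvPolynomial.coeff k f : ℝ) : ℂ) *
    (2 * Real.pi * Complex.I) ^ (-((k.sum fun _ e => e) : ℤ)) * (-1) ^ (k.sum fun _ e => e)
  have h2πi : (2 * Real.pi * Complex.I) ≠ 0 := by simp [Real.pi_ne_zero]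
  calc ∑ k ∈ f.support, c k * (T ∘L fourierInvPi n) (ψ k)
      = T (∑ k ∈ f.support, c k • fourierInvPi n (ψ k)) := by simp [map_sum]
    _ = ∫ x, fourierInvPi n φ x := hT _ _ fun x => by
      rw [← sum_coeff_mul_symbol_eq_eval h2πi, Finset.sum_mul, sum_apply]
      refine Finset.sum_congr rfl fun k hk => ?_
      rw [smul_apply, hψ_eq k hk, fourierInvPi_multiIter_lineDerivOp_apply, smul_eq_mul]
      ring
    _ = φ 0 := integral_fourierInvPi φ

end FundamentalSolution

/-- If every nonconstant real polynomial `f` admits a tempered distribution `T`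
with `f·T = 1`, then every nonzero constant-coefficient differential operator
`P = Σ_k c_k (2πi)^{-|k|} ∂^k` (with `f = Σ_k c_k x^k`) admits a fundamental
solution `S` with `P S = δ₀`; here `P S` is computed via the adjoint,
`(P S)(φ) = Σ_k c_k (2πi)^{-|k|} (-1)^{|k|} S(∂^k φ)`. -/
theorem stmt_11 (n : ℕ)
    (hdiv : ∀ f : MvPolynomial (Fin n) ℝ, 0 < f.totalDegree →
      ∃ T : SchwartzMap (Fin n → ℝ) ℂ →L[ℂ] ℂ,
        ∀ φ ψ : SchwartzMap (Fin n → ℝ) ℂ,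
          (∀ x, ψ x = (MvPolynomial.eval x f : ℂ) * φ x) → T ψ = ∫ x, φ x)
    (f : MvPolynomial (Fin n) ℝ) (hf : f ≠ 0) :
    ∃ S : SchwartzMap (Fin n → ℝ) ℂ →L[ℂ] ℂ,
      ∀ (φ : SchwartzMap (Fin n → ℝ) ℂ)
        (ψ : (Fin n →₀ ℕ) → SchwartzMap (Fin n → ℝ) ℂ),
        (∀ k ∈ f.support, ∀ x, ψ k x = pdPow k (fun y => φ y) x) →
        ∑ k ∈ f.support,
          ((MvPolynomial.coeff k f : ℝ) : ℂ) *
              (2 * Real.pi * Complex.I) ^ (-((k.sum fun _ e => e) : ℤ)) *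
              (-1 : ℂ) ^ (k.sum fun _ e => e) * S (ψ k) = φ 0 := by
  obtain ⟨T, hT⟩ : ∃ T, MulEqOne f T := by
    rcases Nat.eq_zero_or_pos f.totalDegree with hconst | hpos
    · rw [MvPolynomial.totalDegree_eq_zero_iff_eq_C] at hconst
      rw [hconst, Ne, MvPolynomial.C_eq_zero] at hf
      exact hconst ▸ ⟨_, mulEqOne_C hf⟩
    · exact hdiv f hpos
  exact ⟨_, isFundamentalSolution_comp_fourierInvPi hT⟩
end
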